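/- For all integers m ≥ 0 and k ≥ 1, Σ_{i=0}^{m} C(m,i) (q−1)^i E_{i,q}^{(k,k)} = (1+q)^k / ∏_{i=0}^{k−1} (1 + q^{m+k−i}). -/

import Mathlib

open Finset

/-- The q-number `[x]_q = (1 - q^x)/(1 - q)`, with `q^x = exp (x * log q)` (rpow). -/
noncomputable def qNum (q x : ℝ) : ℝ := (1 - q ^ x) / (1 - q)

/-- `[l]_{-q} = (1 - (-q)^l)/(1 + q)` for a natural number `l`. -/
noncomputable def qNumNeg (q : ℝ) (l : ℕ) : ℝ := (1 - (-q) ^ l) / (1 + q)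

/-- The higher-order q-Euler polynomial
`E_{m,q}^{(h,k)}(x) = ((1+q)^k/(1-q)^m) * Σ_{j=0}^m C(m,j) (-1)^j q^{jx} / Π_{i=0}^{k-1} (1 + q^{h+j-i})`. -/
noncomputable def qE (q : ℝ) (h : ℤ) (k m : ℕ) (x : ℝ) : ℝ :=
  ((1 + q) ^ k / (1 - q) ^ m) *
    ∑ j ∈ Finset.range (m + 1),
      (m.choose j : ℝ) * (-1) ^ j * q ^ ((j : ℝ) * x) /
        ∏ i ∈ Finset.range k, (1 + q ^ ((h : ℝ) + (j : ℝ) - (i : ℝ)))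

/-! The quantity `(1 - q)^m E_{m,q}^{(h,k)}` is the alternating binomial transform of
`c_j = (1 + q)^k / ∏_{i<k} (1 + q^{h+j-i})`, so the left-hand side is that transform applied twice
to `c` and evaluated at `m`. The transform is an involution: up to the sign `(-1)^n` it is the
`n`-th forward difference at `0`, and the Gregory–Newton formula inverts forward differences. -/

section BinomialTransform

variable {G : Type*} [AddCommGroup G]

def binomialTransform (f : ℕ → G) (n : ℕ) : G :=
  ∑ j ∈ range (n + 1), ((-1 : ℤ) ^ j * n.choose j) • f j

theorem fwdDiff_iter_eq_neg_one_pow_smul_binomialTransform (f : ℕ → G) (n : ℕ) :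
    (fwdDiff 1)^[n] f 0 = (-1 : ℤ) ^ n • binomialTransform f n := by
  rw [fwdDiff_iter_eq_sum_shift, binomialTransform, smul_sum]
  refine sum_congr rfl fun j hj => ?_
  have hjn : j ≤ n := Nat.lt_succ_iff.mp (mem_range.mp hj)
  have hsign : (-1 : ℤ) ^ n = (-1) ^ (n - j) * (-1) ^ j := by rw [← pow_add, Nat.sub_add_cancel hjn]
  have hsq : (-1 : ℤ) ^ j * (-1) ^ j = 1 := by rw [← mul_pow]; norm_num
  rw [smul_smul, zero_add, smul_eq_mul, mul_one, hsign]
  congr 1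
  linear_combination (-(-1 : ℤ) ^ (n - j) * n.choose j) * hsq

theorem binomialTransform_binomialTransform (f : ℕ → G) :
    binomialTransform (binomialTransform f) = f := by
  funext n
  have newton := shift_eq_sum_fwdDiff_iter 1 f n 0
  rw [zero_add, smul_eq_mul, mul_one] at newton
  rw [newton, binomialTransform]
  refine sum_congr rfl fun j _ => ?_
  rw [fwdDiff_iter_eq_neg_one_pow_smul_binomialTransform, ← natCast_zsmul, smul_smul,
    mul_comm]

end BinomialTransform

theorem one_sub_pow_mul_qE_zero {q : ℝ} (hq1 : q ≠ 1) (h : ℤ) (k m : ℕ) :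
    (1 - q) ^ m * qE q h k m 0 =
      binomialTransform (fun j : ℕ ↦ (1 + q) ^ k / ∏ i ∈ range k, (1 + q ^ ((h : ℝ) + j - i))) m := by
  rw [qE, ← mul_assoc, mul_div_cancel₀ _ (pow_ne_zero _ (sub_ne_zero.2 hq1.symm)), binomialTransform,
    mul_sum]
  refine sum_congr rfl fun j _ => ?_
  rw [mul_zero, Real.rpow_zero, zsmul_eq_mul]
  push_cast
  ring

theorem stmt_13 (q : ℝ) (hq1 : q ≠ 1) (m k : ℕ) :
    ∑ i ∈ Finset.range (m + 1), (m.choose i : ℝ) * (q - 1) ^ i * qE q k k i 0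
      = (1 + q) ^ k /
          ∏ i ∈ Finset.range k, (1 + q ^ ((m : ℝ) + (k : ℝ) - (i : ℝ))) := by
  set c : ℕ → ℝ := fun j ↦ (1 + q) ^ k / ∏ i ∈ range k, (1 + q ^ (((k : ℤ) : ℝ) + j - i))
  calc ∑ i ∈ range (m + 1), (m.choose i : ℝ) * (q - 1) ^ i * qE q k k i 0
      = ∑ i ∈ range (m + 1), ((-1 : ℤ) ^ i * m.choose i) • binomialTransform c i := by
        refine sum_congr rfl fun i _ => ?_
        rw [← one_sub_pow_mul_qE_zero hq1, zsmul_eq_mul, show q - 1 = -1 * (1 - q) by ring,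
          mul_pow]
        push_cast
        ring
    _ = c m := congrFun (binomialTransform_binomialTransform c) m
    _ = _ := by
        simp only [c, Int.cast_natCast, add_comm (k : ℝ)]
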